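/- Let P be a simple closed n-gon in ℝ² with n ≥ 4, and let a ∈ ℝ² \ P be a point such that every ray emanating from a meets P. Then a sees via ℝ² \ P two non-adjacent vertices of P, i.e., there are vertices c', c'' of P that are not endpoints of a common edge, with the open segments (a,c') and (a,c'') disjoint from P. -/

import Mathlib

open Set Metric

abbrev Plane := EuclideanSpace ℝ (Fin 2)

/-- The `i`-th edge of the closed polygon with vertex cycle `p`. -/
def polyEdge {n : ℕ} (p : ZMod n → Plane) (i : ZMod n) : Set Plane :=
  segment ℝ (p i) (p (i + 1))

/-- The union of the edges of the closed polygon with vertex cycle `p`. -/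
def polyBody {n : ℕ} (p : ZMod n → Plane) : Set Plane :=
  ⋃ i, polyEdge p i

/-- `p` is the vertex cycle of a simple closed `n`-gon: distinct vertices,
consecutive edges meet exactly in their common endpoint, non-consecutive edges
are disjoint. -/
structure IsSimplePolygon {n : ℕ} (p : ZMod n → Plane) : Prop where
  three_le : 3 ≤ n
  inj : Function.Injective p
  consec : ∀ i : ZMod n, polyEdge p i ∩ polyEdge p (i + 1) = {p (i + 1)}
  nonconsec : ∀ i j : ZMod n, j ≠ i → j ≠ i + 1 → i ≠ j + 1 →
    polyEdge p i ∩ polyEdge p j = ∅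

/-- The union of the bounded connected components of the complement of `P`
(the Jordan interior of `P`). -/
def intP (P : Set Plane) : Set Plane :=
  {x | x ∉ P ∧ Bornology.IsBounded (connectedComponentIn Pᶜ x)}

/-- The union of the unbounded connected components of the complement of `P`
(the Jordan exterior of `P`). -/
def extP (P : Set Plane) : Set Plane :=
  {x | x ∉ P ∧ ¬ Bornology.IsBounded (connectedComponentIn Pᶜ x)}

/-- There is a polygonal path of `k` segments from `a` to `b` inside `S`. -/
def PolyPath (S : Set Plane) (a b : Plane) (k : ℕ) : Prop :=
  ∃ x : Fin (k + 1) → Plane, x 0 = a ∧ x (Fin.last k) = b ∧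
    ∀ i : Fin k, segment ℝ (x i.castSucc) (x i.succ) ⊆ S

/-- The minimal number of segments of a polygonal path from `a` to `b` in `S`. -/
noncomputable def polyDist (S : Set Plane) (a b : Plane) : ℕ :=
  sInf {k | PolyPath S a b k}

/-!
Suppose that any two vertices seen by `a` are adjacent, so that all of them lie on one edge
`[p s, p (s + 1)]`. Follow the first point where the ray from `a` in a unit direction `u` meets
`P`. If it is a vertex, that vertex is seen from `a`, so `u` points to `p s` or to `p (s + 1)`.
For every other `u` the first hit lies inside an edge, which the ray crosses transversally, so
it stays inside that edge when `u` is perturbed. The two exceptional directions cut the circle of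
directions into two arcs, and by connectedness each arc has all its first hits inside a single
edge, `e_i` resp. `e_j`. Separating `a` from `e_i` and from `e_j` by two lines leaves a cone of
directions whose rays miss both edges; it contains a direction other than the two exceptional
ones (these are not opposite, as `a ∉ [p s, p (s + 1)]`), and the first hit in that direction
can lie on neither `e_i` nor `e_j`.
-/

open Function Filter Topology

lemma IsPreconnected.exists_subset_of_subset_iUnion {ι X : Type*} [TopologicalSpace X]
    [Nonempty ι] {s : Set X} {U : ι → Set X} (hs : IsPreconnected s) (hU : ∀ i, IsOpen (U i))
    (hdisj : Pairwise (Disjoint on U)) (hsU : s ⊆ ⋃ i, U i) : ∃ i, s ⊆ U i := by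
  rcases s.eq_empty_or_nonempty with rfl | ⟨x, hx⟩
  · exact ⟨Classical.arbitrary ι, empty_subset _⟩
  obtain ⟨i, hi⟩ := mem_iUnion.1 (hsU hx)
  refine ⟨i, hs.subset_left_of_subset_union (hU i) (isOpen_biUnion fun j _ => hU j)
    (disjoint_iUnion₂_right.2 fun j hj => hdisj (Ne.symm hj)) (fun y hy => ?_) ⟨x, hx, hi⟩⟩
  obtain ⟨j, hj⟩ := mem_iUnion.1 (hsU hy)
  by_cases hji : j = i
  · exact Or.inl (hji ▸ hj)
  · exact Or.inr (mem_biUnion hji hj)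

lemma Circle.exists_isPreconnected_union_eq_compl_pair (x y : Circle) :
    ∃ A B : Set Circle, IsPreconnected A ∧ IsPreconnected B ∧ A ∪ B = {x, y}ᶜ := by
  rcases eq_or_ne x y with rfl | h
  · exact ⟨{x}ᶜ, ∅, (isPathConnected_compl_singleton x).isConnected.isPreconnected,
      isPreconnected_empty, by simp⟩
  refine ⟨(range (path x y))ᶜ, (range (path y x))ᶜ, ?_, ?_, by
    rw [← compl_inter, range_path_inter_range_path h]⟩
  · rw [compl_range_path h]
    exact isPreconnected_Ioo.image _ (path y x).continuous.continuousOn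
  · rw [compl_range_path h.symm]
    exact isPreconnected_Ioo.image _ (path x y).continuous.continuousOn

lemma left_or_right_mem_openSegment_lineMap {E : Type*} [AddCommGroup E] [Module ℝ E]
    (b c : E) {s t : ℝ} (hs : s ∉ Icc (0 : ℝ) 1) (ht : t ∈ Ioo (0 : ℝ) 1) :
    b ∈ openSegment ℝ (AffineMap.lineMap b c s) (AffineMap.lineMap b c t) ∨
      c ∈ openSegment ℝ (AffineMap.lineMap b c s) (AffineMap.lineMap b c t) := by
  rw [← image_openSegment]
  rcases not_and_or.1 hs with h | h
  · refine Or.inl ⟨0, ?_, AffineMap.lineMap_apply_zero _ _⟩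
    rw [openSegment_eq_Ioo (by linarith [ht.1])]
    exact ⟨not_le.1 h, ht.1⟩
  · refine Or.inr ⟨1, ?_, AffineMap.lineMap_apply_one _ _⟩
    rw [openSegment_symm, openSegment_eq_Ioo (by linarith [ht.2])]
    exact ⟨ht.2, not_le.1 h⟩

section NormedSpace

variable {E : Type*} [NormedAddCommGroup E] [NormedSpace ℝ E]

lemma isCompact_segment (x y : E) : IsCompact (segment ℝ x y) := by
  rw [← convexHull_pair (𝕜 := ℝ)]
  exact (toFinite {x, y}).isCompact_convexHull ℝ

lemma eq_inv_norm_smul_sub_of_add_smul_eq {a u x : E} {l : ℝ} (hl : 0 < l) (hu : ‖u‖ = 1)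
    (hx : a + l • u = x) : u = ‖x - a‖⁻¹ • (x - a) := by
  subst hx
  rw [add_sub_cancel_left, norm_smul, hu, mul_one, Real.norm_of_nonneg hl.le, smul_smul,
    inv_mul_cancel₀ hl.ne', one_smul]

lemma mem_segment_of_inv_norm_smul_eq_neg {a x y : E}
    (h : ‖y - a‖⁻¹ • (y - a) = -(‖x - a‖⁻¹ • (x - a))) : a ∈ segment ℝ x y := by
  rw [mem_segment_iff_sameRay, sameRay_iff_inv_norm_smul_eq, h, ← neg_sub x a, norm_neg, smul_neg]
  exact Or.inr (Or.inr rfl)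

lemma add_smul_notMem_of_separated {S : Set E} {a u : E} {l t : ℝ} (f : E →L[ℝ] ℝ)
    (hfa : f a < t) (hS : ∀ x ∈ S, t < f x) (hu : f u ≤ 0) (hl : 0 ≤ l) : a + l • u ∉ S :=
  fun hx => by
    have := hS _ hx
    rw [map_add, map_smul, smul_eq_mul] at this
    nlinarith

lemma eventually_disjoint_segment {X : Type*} [TopologicalSpace X] {K : Set E} (hK : IsClosed K)
    {a : E} {γ : X → E} {x₀ : X} (hγ : ContinuousAt γ x₀) (h : Disjoint (segment ℝ a (γ x₀)) K) :
    ∀ᶠ x in 𝓝 x₀, Disjoint (segment ℝ a (γ x)) K := by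
  have hγ' : ∀ᶠ x in 𝓝 x₀, ∀ t ∈ Icc (0 : ℝ) 1, a + t • (γ x - a) ∉ K := by
    refine isCompact_Icc.eventually_forall_of_forall_eventually fun t ht => ?_
    have hcont : ContinuousAt (fun z : X × ℝ => a + z.2 • (γ z.1 - a)) (x₀, t) :=
      continuousAt_const.add (continuousAt_snd.smul
        ((hγ.comp (x := (x₀, t)) continuousAt_fst).sub continuousAt_const))
    refine hcont.eventually (hK.isOpen_compl.mem_nhds fun hxK => ?_)
    rw [segment_eq_image'] at h
    exact Set.disjoint_left.1 h ⟨t, ht, rfl⟩ hxK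
  filter_upwards [hγ'] with x hx
  rw [segment_eq_image']
  exact Set.disjoint_left.2 fun _ ⟨t, ht, hy⟩ => hy ▸ hx t ht

end NormedSpace

section FirstHit

variable {E : Type*} [NormedAddCommGroup E] [NormedSpace ℝ E] {B : Set E} {a u : E} {l : ℝ}

/-- `0`, that is `sInf ∅`, when the ray misses `B`. -/
noncomputable def firstHit (B : Set E) (a u : E) : ℝ :=
  sInf {l : ℝ | 0 ≤ l ∧ a + l • u ∈ B}

lemma firstHit_nonneg : 0 ≤ firstHit B a u :=
  Real.sInf_nonneg fun _ hl => hl.1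

lemma firstHit_le (hl : 0 ≤ l) (hB : a + l • u ∈ B) : firstHit B a u ≤ l :=
  csInf_le ⟨0, fun _ hm => hm.1⟩ ⟨hl, hB⟩

lemma add_smul_notMem_of_lt_firstHit (hl : 0 ≤ l) (hlt : l < firstHit B a u) :
    a + l • u ∉ B :=
  fun hB => (firstHit_le hl hB).not_gt hlt

lemma firstHit_eq (hl : 0 ≤ l) (hB : a + l • u ∈ B)
    (hfree : ∀ m, 0 ≤ m → m < l → a + m • u ∉ B) : firstHit B a u = l :=
  (firstHit_le hl hB).antisymm <|
    le_csInf ⟨l, hl, hB⟩ fun m hm => not_lt.1 fun h => hfree m hm.1 h hm.2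

lemma firstHit_mem (hB : IsClosed B) (h : ∃ l : ℝ, 0 ≤ l ∧ a + l • u ∈ B) :
    a + firstHit B a u • u ∈ B := by
  have hcl : IsClosed {l : ℝ | 0 ≤ l ∧ a + l • u ∈ B} :=
    isClosed_Ici.inter (hB.preimage (by fun_prop))
  obtain ⟨l, hl⟩ := h
  exact (hcl.csInf_mem ⟨l, hl⟩ ⟨0, fun _ hm => hm.1⟩).2

lemma firstHit_pos (ha : a ∉ B) (h : a + firstHit B a u • u ∈ B) : 0 < firstHit B a u :=
  firstHit_nonneg.lt_of_ne fun h0 => ha (by simpa [← h0] using h)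

lemma openSegment_firstHit_inter_eq_empty (ha : a ∉ B) :
    openSegment ℝ a (a + firstHit B a u • u) ∩ B = ∅ := by
  refine eq_empty_iff_forall_notMem.2 fun x ⟨hx, hB⟩ => ?_
  rw [openSegment_eq_image'] at hx
  obtain ⟨θ, ⟨hθ0, hθ1⟩, rfl⟩ := hx
  simp only [add_sub_cancel_left, smul_smul] at hB
  rcases (firstHit_nonneg (B := B) (a := a) (u := u)).eq_or_lt with h0 | hpos
  · exact ha (by simpa [← h0] using hB)
  · exact add_smul_notMem_of_lt_firstHit (by positivity) (mul_lt_of_lt_one_left hpos hθ1) hB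

theorem eventually_firstHit_mem {K F : Set E} {φ : E →L[ℝ] ℝ} {c : ℝ} {u₀ : E}
    (hK : IsClosed K) (hKB : K ⊆ B) (hBK : B ⊆ K ∪ {x | φ x = c}) (hFB : F ⊆ B)
    (ha : a ∉ B) (hφ : φ u₀ ≠ 0)
    (hq₀ : a + firstHit B a u₀ • u₀ ∈ F) (hq₀K : a + firstHit B a u₀ • u₀ ∉ K)
    (hF : ∀ᶠ x in 𝓝 (a + firstHit B a u₀ • u₀), φ x = c → x ∈ F) :
    ∀ᶠ u in 𝓝 u₀, a + firstHit B a u • u ∈ F := by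
  set l₀ := firstHit B a u₀
  have hl₀ : 0 < l₀ := firstHit_pos ha (hFB hq₀)
  have hφq₀ : φ (a + l₀ • u₀) = c := (hBK (hFB hq₀)).resolve_left hq₀K
  -- the ray in direction `u` meets the hyperplane `φ = c` at the parameter `L u`
  set L : E → ℝ := fun u => (c - φ a) / φ u
  set X : E → E := fun u => a + L u • u
  have hL₀ : L u₀ = l₀ := by
    simp only [L, ← hφq₀, map_add, map_smul, smul_eq_mul]
    field_simp
    ring
  have hLc : ContinuousAt L u₀ := continuousAt_const.div φ.continuous.continuousAt hφ
  have hXc : ContinuousAt X u₀ := continuousAt_const.add (hLc.smul continuousAt_id)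
  have hseg₀ : Disjoint (segment ℝ a (X u₀)) K := by
    rw [Set.disjoint_left, show X u₀ = a + l₀ • u₀ by simp only [X, hL₀],
      ← insert_endpoints_openSegment]
    rintro x (rfl | rfl | hx) hxK
    exacts [ha (hKB hxK), hq₀K hxK,
      (openSegment_firstHit_inter_eq_empty ha).subset ⟨hx, hKB hxK⟩]
  filter_upwards [hLc.eventually (lt_mem_nhds (hL₀ ▸ hl₀)),
    hXc.eventually (by simpa only [X, hL₀] using hF),
    eventually_disjoint_segment hK hXc hseg₀] with u hLu hFu hsegu
  have hφu : φ u ≠ 0 := fun h => by simp [L, h] at hLu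
  have hXφ : φ (X u) = c := by
    simp only [X, L, map_add, map_smul, smul_eq_mul]
    field_simp
    ring
  rw [firstHit_eq hLu.le (hFB (hFu hXφ)) fun m hm hmL hmB => ?_]
  · exact hFu hXφ
  rcases hBK hmB with hmK | hmφ
  · refine Set.disjoint_left.1 hsegu ?_ hmK
    rw [segment_eq_image']
    refine ⟨m / L u, ⟨by positivity, div_le_one_of_le₀ hmL.le hLu.le⟩, ?_⟩
    simp only [X, add_sub_cancel_left, smul_smul, div_mul_cancel₀ _ hLu.ne']
  · have hmφ' : φ a + m * φ u = c := by simpa using hmφ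
    have : m * φ u = L u * φ u := by
      simp only [L]
      field_simp
      linarith
    exact hmL.ne (mul_right_cancel₀ hφu this)

end FirstHit

section Cone

variable {E : Type*} [NormedAddCommGroup E] [NormedSpace ℝ E]

lemma exists_injective_unit_nonpos_of_surjective {f g : E →L[ℝ] ℝ}
    (hfg : Surjective ((f : E →ₗ[ℝ] ℝ).prod (g : E →ₗ[ℝ] ℝ))) :
    ∃ w : Fin 3 → E, Injective w ∧ ∀ i, ‖w i‖ = 1 ∧ f (w i) ≤ 0 ∧ g (w i) ≤ 0 := by
  choose v hv using hfg
  have hfv (x : ℝ × ℝ) : f (v x) = x.1 := congrArg Prod.fst (hv x)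
  have hgv (x : ℝ × ℝ) : g (v x) = x.2 := congrArg Prod.snd (hv x)
  have hv₀ (i : Fin 3) : v (-1, -i) ≠ 0 := fun h0 => by simpa [h0] using hfv (-1, -i)
  set c : Fin 3 → ℝ := fun i => ‖v (-1, -i)‖⁻¹
  have hc (i : Fin 3) : 0 < c i := inv_pos.2 (norm_pos_iff.2 (hv₀ i))
  have hfw (i : Fin 3) : f (c i • v (-1, -i)) = -c i := by simp [hfv]
  have hgw (i : Fin 3) : g (c i • v (-1, -i)) = -(c i * i) := by simp [hgv]
  refine ⟨fun i => c i • v (-1, -i), fun i j hij => ?_, fun i =>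
    ⟨norm_smul_inv_norm (hv₀ i), by rw [hfw]; linarith [hc i], by
      rw [hgw]; nlinarith [hc i, (i.val.cast_nonneg : (0 : ℝ) ≤ i)]⟩⟩
  have h₁ : c i = c j := by simpa [hfw] using congrArg f hij
  have h₂ := congrArg g hij
  rw [hgw, hgw, h₁] at h₂
  exact Fin.ext (by exact_mod_cast mul_left_cancel₀ (hc j).ne' (neg_inj.1 h₂))

lemma exists_unit_nonpos_nonpos_ne [FiniteDimensional ℝ E] (hE : Module.finrank ℝ E = 2)
    (f g : E →L[ℝ] ℝ) {d₀ d₁ : E} (hd : d₁ ≠ -d₀) :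
    ∃ u : E, ‖u‖ = 1 ∧ f u ≤ 0 ∧ g u ≤ 0 ∧ u ≠ d₀ ∧ u ≠ d₁ := by
  classical
  by_contra! h
  set L : E →ₗ[ℝ] ℝ × ℝ := (f : E →ₗ[ℝ] ℝ).prod g
  -- If `L` is injective it is onto `ℝ²`, which gives three admissible directions; otherwise a
  -- kernel direction and its opposite are both admissible, and `hd` keeps them from being `d₀`
  -- and `d₁`.
  by_cases hL : Injective L
  · obtain ⟨w, hw_inj, hw⟩ := exists_injective_unit_nonpos_of_surjective
      ((LinearMap.injective_iff_surjective_of_finrank_eq_finrank (by simp [hE])).1 hL)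
    have hw_mem (i : Fin 3) : w i ∈ ({d₀, d₁} : Finset E) := by
      have := h (w i) (hw i).1 (hw i).2.1 (hw i).2.2
      rw [Finset.mem_insert, Finset.mem_singleton]
      tauto
    obtain ⟨i, -, j, -, hij, hwij⟩ := Finset.exists_ne_map_eq_of_card_lt_of_maps_to
      (s := Finset.univ) (Finset.card_le_two.trans_lt (by simp)) fun i _ => hw_mem i
    exact hij (hw_inj hwij)
  · obtain ⟨k, hLk, hk⟩ : ∃ k, L k = 0 ∧ k ≠ 0 := by
      simpa [injective_iff_map_eq_zero] using hL
    have hfk : f k = 0 := congrArg Prod.fst hLk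
    have hgk : g k = 0 := congrArg Prod.snd hLk
    set u := ‖k‖⁻¹ • k
    have hu : ‖u‖ = 1 := norm_smul_inv_norm hk
    have hu_ne : -u ≠ u := fun h => by
      rw [neg_eq_iff_add_eq_zero, ← two_smul ℝ, smul_eq_zero] at h
      simp_all
    have h₁ := h u hu (by simp [u, hfk]) (by simp [u, hgk])
    have h₂ := h (-u) (by rw [norm_neg, hu]) (by simp [u, hfk]) (by simp [u, hgk])
    grind

end Cone

section Plane

noncomputable def circleDir (z : Circle) : Plane :=
  Complex.orthonormalBasisOneI.repr z

lemma continuous_circleDir : Continuous circleDir :=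
  Complex.orthonormalBasisOneI.repr.continuous.comp continuous_subtype_val

lemma circleDir_injective : Injective circleDir := fun _ _ h =>
  Circle.ext (Complex.orthonormalBasisOneI.repr.injective h)

lemma norm_circleDir (z : Circle) : ‖circleDir z‖ = 1 := by
  rw [circleDir, LinearIsometryEquiv.norm_map, Circle.norm_coe]

lemma exists_circleDir_eq {u : Plane} (hu : ‖u‖ = 1) : ∃ z, circleDir z = u :=
  ⟨⟨Complex.orthonormalBasisOneI.repr.symm u,
      mem_sphere_zero_iff_norm.2 (by rw [LinearIsometryEquiv.norm_map, hu])⟩,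
    Complex.orthonormalBasisOneI.repr.apply_symm_apply u⟩

noncomputable def perpDot (e : Plane) : Plane →L[ℝ] ℝ :=
  e 0 • EuclideanSpace.proj 1 - e 1 • EuclideanSpace.proj 0

lemma perpDot_apply (e x : Plane) : perpDot e x = e 0 * x 1 - e 1 * x 0 := rfl

lemma perpDot_self (e : Plane) : perpDot e e = 0 := by
  rw [perpDot_apply]; ring

lemma exists_eq_smul_of_perpDot_eq_zero {e x : Plane} (he : e ≠ 0) (h : perpDot e x = 0) :
    ∃ r : ℝ, x = r • e := by
  rw [perpDot_apply] at h
  have hd : e 0 ^ 2 + e 1 ^ 2 ≠ 0 := by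
    rw [← Fin.sum_univ_two (fun i => e i ^ 2), ← EuclideanSpace.real_norm_sq_eq]
    positivity
  refine ⟨(x 0 * e 0 + x 1 * e 1) / (e 0 ^ 2 + e 1 ^ 2), ?_⟩
  ext i
  fin_cases i <;> simp <;> field_simp
  · linear_combination -e 1 * h
  · linear_combination e 0 * h

lemma eventually_perpDot_eq_imp_mem_openSegment {b c q : Plane} (hbc : b ≠ c)
    (hq : q ∈ openSegment ℝ b c) :
    ∀ᶠ x in 𝓝 q, perpDot (c - b) x = perpDot (c - b) b → x ∈ openSegment ℝ b c := by
  set e := c - b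
  have he : e ≠ 0 := sub_ne_zero.2 hbc.symm
  have hee : inner ℝ e e ≠ 0 := inner_self_ne_zero.2 he
  set τ : Plane → ℝ := fun x => inner ℝ (x - b) e / inner ℝ e e
  have hτ (r : ℝ) : τ (b + r • e) = r := by
    simp only [τ, add_sub_cancel_left, real_inner_smul_left]
    field_simp
  rw [openSegment_eq_image'] at hq ⊢
  obtain ⟨t, ht, rfl⟩ := hq
  have hτc : Continuous τ := by fun_prop
  filter_upwards [hτc.continuousAt.eventually (isOpen_Ioo.mem_nhds (hτ t ▸ ht))] with x hx hxe
  obtain ⟨r, hr⟩ := exists_eq_smul_of_perpDot_eq_zero he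
    (show perpDot e (x - b) = 0 by rw [map_sub, hxe, sub_self])
  have hxr : x = b + r • e := by rw [← hr, add_sub_cancel]
  refine ⟨r, ?_, hxr.symm⟩
  rwa [hxr, hτ] at hx

end Plane

lemma ZMod.exists_subset_pair_of_pairwise_adjacent {n : ℕ} (hn : 4 ≤ n) {V : Set (ZMod n)}
    (hV : ∀ k ∈ V, ∀ l ∈ V, k = l ∨ l = k + 1 ∨ k = l + 1) : ∃ s, V ⊆ {s, s + 1} := by
  have hne (c : ℕ) (hc₀ : 0 < c) (hc : c < 4) : (c : ZMod n) ≠ 0 := by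
    rw [Ne, ZMod.natCast_eq_zero_iff]
    exact fun h => by have := Nat.le_of_dvd hc₀ h; omega
  have h₂ : (2 : ZMod n) ≠ 0 := by exact_mod_cast hne 2 (by norm_num) (by norm_num)
  have h₃ : (3 : ZMod n) ≠ 0 := by exact_mod_cast hne 3 (by norm_num) (by norm_num)
  rcases V.eq_empty_or_nonempty with rfl | ⟨k, hk⟩
  · exact ⟨0, empty_subset _⟩
  by_cases hk' : k - 1 ∈ V
  · refine ⟨k - 1, fun l hl => ?_⟩
    have := hV k hk l hl
    have := hV (k - 1) hk' l hl
    grind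
  · refine ⟨k, fun l hl => ?_⟩
    have := hV k hk l hl
    grind

def openEdge {n : ℕ} (p : ZMod n → Plane) (i : ZMod n) : Set Plane :=
  openSegment ℝ (p i) (p (i + 1))

section Polygon

variable {n : ℕ} {p : ZMod n → Plane}

lemma polyEdge_subset_polyBody (i : ZMod n) : polyEdge p i ⊆ polyBody p :=
  subset_iUnion (polyEdge p) i

lemma openEdge_subset_polyEdge (i : ZMod n) : openEdge p i ⊆ polyEdge p i :=
  openSegment_subset_segment ℝ _ _

lemma vertex_mem_polyBody (i : ZMod n) : p i ∈ polyBody p :=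
  polyEdge_subset_polyBody i (left_mem_segment ℝ _ _)

lemma eq_vertex_or_mem_openEdge {x : Plane} (hx : x ∈ polyBody p) :
    (∃ m, x = p m) ∨ ∃ k, x ∈ openEdge p k := by
  obtain ⟨k, hk⟩ := mem_iUnion.1 hx
  rw [polyEdge, ← insert_endpoints_openSegment] at hk
  rcases hk with h | h | h
  exacts [Or.inl ⟨k, h⟩, Or.inl ⟨k + 1, h⟩, Or.inr ⟨k, h⟩]

lemma perpDot_eq_of_mem_polyEdge {k : ZMod n} {x : Plane} (hx : x ∈ polyEdge p k) :
    perpDot (p (k + 1) - p k) x = perpDot (p (k + 1) - p k) (p k) := by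
  rw [polyEdge, segment_eq_image'] at hx
  obtain ⟨t, -, rfl⟩ := hx
  rw [map_add, map_smul, perpDot_self, smul_zero, add_zero]

namespace IsSimplePolygon

lemma neZero (hP : IsSimplePolygon p) : NeZero n :=
  ⟨by have := hP.three_le; omega⟩

lemma isClosed_polyBody (hP : IsSimplePolygon p) : IsClosed (polyBody p) :=
  have := hP.neZero
  isClosed_iUnion_of_finite fun _ => (isCompact_segment _ _).isClosed

lemma apply_ne_apply_add_one (hP : IsSimplePolygon p) (i : ZMod n) : p i ≠ p (i + 1) :=
  fun h => by
    have : Fact (1 < n) := ⟨by have := hP.three_le; omega⟩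
    exact one_ne_zero (left_eq_add.1 (hP.inj h))

lemma disjoint_openEdge_polyEdge (hP : IsSimplePolygon p) {j k : ZMod n} (hjk : j ≠ k) :
    Disjoint (openEdge p k) (polyEdge p j) := by
  refine Set.disjoint_left.2 fun x hxk hxj => ?_
  by_cases h₁ : j = k + 1
  · subst h₁
    have hx : x ∈ polyEdge p k ∩ polyEdge p (k + 1) := ⟨openEdge_subset_polyEdge k hxk, hxj⟩
    rw [hP.consec k, mem_singleton_iff] at hx
    subst hx
    exact hP.apply_ne_apply_add_one k (right_mem_openSegment_iff.1 hxk)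
  by_cases h₂ : k = j + 1
  · subst h₂
    have hx : x ∈ polyEdge p j ∩ polyEdge p (j + 1) := ⟨hxj, openEdge_subset_polyEdge _ hxk⟩
    rw [hP.consec j, mem_singleton_iff] at hx
    subst hx
    exact hP.apply_ne_apply_add_one (j + 1) (left_mem_openSegment_iff.1 hxk)
  · have hx : x ∈ polyEdge p k ∩ polyEdge p j := ⟨openEdge_subset_polyEdge k hxk, hxj⟩
    rwa [hP.nonconsec k j hjk h₁ h₂] at hx

lemma perpDot_ne_zero_of_firstHit_mem_openEdge (hP : IsSimplePolygon p) {a u : Plane}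
    {k : ZMod n} (ha : a ∉ polyBody p)
    (hq : a + firstHit (polyBody p) a u • u ∈ openEdge p k) :
    perpDot (p (k + 1) - p k) u ≠ 0 := by
  -- Otherwise `a` lies on the line of the edge but off the edge, and the ray from `a` passes
  -- through an endpoint before reaching the inside of the edge.
  intro h0
  obtain ⟨r, hr⟩ := exists_eq_smul_of_perpDot_eq_zero
    (sub_ne_zero.2 (hP.apply_ne_apply_add_one k).symm) h0
  have hfree := openSegment_firstHit_inter_eq_empty (u := u) ha
  set l := firstHit (polyBody p) a u
  rw [openEdge, openSegment_eq_image_lineMap] at hq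
  obtain ⟨t, ht, hqt⟩ := hq
  have ha' : a = AffineMap.lineMap (p k) (p (k + 1)) (t - l * r) := by
    have := hqt.symm
    rw [AffineMap.lineMap_apply_module', hr] at this
    rw [AffineMap.lineMap_apply_module']
    linear_combination (norm := module) this
  have hs : t - l * r ∉ Icc (0 : ℝ) 1 := fun hs => ha <| polyEdge_subset_polyBody k <| by
    rw [ha', polyEdge, segment_eq_image_lineMap]
    exact mem_image_of_mem _ hs
  rw [← hqt, ha'] at hfree
  rcases left_or_right_mem_openSegment_lineMap (p k) (p (k + 1)) hs ht with h | h
  · exact hfree.subset ⟨h, vertex_mem_polyBody k⟩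
  · exact hfree.subset ⟨h, vertex_mem_polyBody (k + 1)⟩

lemma isOpen_setOf_firstHit_mem_openEdge (hP : IsSimplePolygon p) {a : Plane}
    (ha : a ∉ polyBody p) (k : ZMod n) :
    IsOpen {u | a + firstHit (polyBody p) a u • u ∈ openEdge p k} := by
  have := hP.neZero
  refine isOpen_iff_mem_nhds.2 fun u₀ hu₀ => eventually_firstHit_mem
    (K := ⋃ j ∈ ({k}ᶜ : Set (ZMod n)), polyEdge p j)
    ((toFinite _).isClosed_biUnion fun j _ => (isCompact_segment _ _).isClosed)
    (iUnion₂_subset fun j _ => polyEdge_subset_polyBody j) (fun x hx => ?_)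
    ((openEdge_subset_polyEdge k).trans (polyEdge_subset_polyBody k)) ha
    (hP.perpDot_ne_zero_of_firstHit_mem_openEdge ha hu₀) hu₀ (fun hK => ?_)
    (eventually_perpDot_eq_imp_mem_openSegment (hP.apply_ne_apply_add_one k) hu₀)
  · obtain ⟨j, hj⟩ := mem_iUnion.1 hx
    by_cases hjk : j = k
    · subst hjk
      exact Or.inr (perpDot_eq_of_mem_polyEdge hj)
    · exact Or.inl (mem_biUnion hjk hj)
  · obtain ⟨j, hj, hxj⟩ := mem_iUnion₂.1 hK
    exact Set.disjoint_left.1 (hP.disjoint_openEdge_polyEdge hj) hu₀ hxj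

lemma exists_firstHit_mem_openEdge_union (hP : IsSimplePolygon p) {a : Plane}
    (ha : a ∉ polyBody p)
    (hray : ∀ u : Plane, ‖u‖ = 1 → ∃ l : ℝ, 0 ≤ l ∧ a + l • u ∈ polyBody p) {s : ZMod n}
    (hvis : ∀ m, openSegment ℝ a (p m) ∩ polyBody p = ∅ → m = s ∨ m = s + 1) :
    ∃ i j : ZMod n, ∀ u : Plane, ‖u‖ = 1 → u ≠ ‖p s - a‖⁻¹ • (p s - a) →
      u ≠ ‖p (s + 1) - a‖⁻¹ • (p (s + 1) - a) →
      a + firstHit (polyBody p) a u • u ∈ openEdge p i ∪ openEdge p j := by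
  set hit : Plane → Plane := fun u => a + firstHit (polyBody p) a u • u
  have hhit (u : Plane) (hu : ‖u‖ = 1) : hit u ∈ polyBody p :=
    firstHit_mem hP.isClosed_polyBody (hray u hu)
  -- a first hit at a vertex makes that vertex visible
  have hcover (u : Plane) (hu : ‖u‖ = 1) (h₀ : u ≠ ‖p s - a‖⁻¹ • (p s - a))
      (h₁ : u ≠ ‖p (s + 1) - a‖⁻¹ • (p (s + 1) - a)) : ∃ k, hit u ∈ openEdge p k := by
    refine (eq_vertex_or_mem_openEdge (hhit u hu)).resolve_left ?_
    rintro ⟨m, hm⟩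
    have hu_eq := eq_inv_norm_smul_sub_of_add_smul_eq (firstHit_pos ha (hhit u hu)) hu hm
    rcases hvis m (hm ▸ openSegment_firstHit_inter_eq_empty ha) with rfl | rfl
    exacts [h₀ hu_eq, h₁ hu_eq]
  have hunit (m : ZMod n) : ‖‖p m - a‖⁻¹ • (p m - a)‖ = 1 :=
    norm_smul_inv_norm (sub_ne_zero.2 fun h => ha (h ▸ vertex_mem_polyBody m))
  obtain ⟨z₀, hz₀⟩ := exists_circleDir_eq (hunit s)
  obtain ⟨z₁, hz₁⟩ := exists_circleDir_eq (hunit (s + 1))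
  obtain ⟨A, B, hA, hB, hAB⟩ := Circle.exists_isPreconnected_union_eq_compl_pair z₀ z₁
  set S : ZMod n → Set Circle := fun k => (hit ∘ circleDir) ⁻¹' openEdge p k
  have hS_open (k : ZMod n) : IsOpen (S k) :=
    (hP.isOpen_setOf_firstHit_mem_openEdge ha k).preimage continuous_circleDir
  have hS_disj : Pairwise (Disjoint on S) := fun k k' hkk' =>
    ((hP.disjoint_openEdge_polyEdge hkk'.symm).mono_right (openEdge_subset_polyEdge k')).preimage _
  have hS_cover : {z₀, z₁}ᶜ ⊆ ⋃ k, S k := fun z hz => by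
    simp only [mem_compl_iff, mem_insert_iff, mem_singleton_iff, not_or] at hz
    exact mem_iUnion.2 (hcover _ (norm_circleDir z)
      (fun h => hz.1 (circleDir_injective (h.trans hz₀.symm)))
      (fun h => hz.2 (circleDir_injective (h.trans hz₁.symm))))
  obtain ⟨i, hi⟩ := hA.exists_subset_of_subset_iUnion hS_open hS_disj
    ((hAB ▸ subset_union_left).trans hS_cover)
  obtain ⟨j, hj⟩ := hB.exists_subset_of_subset_iUnion hS_open hS_disj
    ((hAB ▸ subset_union_right).trans hS_cover)
  refine ⟨i, j, fun u hu h₀ h₁ => ?_⟩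
  obtain ⟨z, rfl⟩ := exists_circleDir_eq hu
  have hz : z ∈ A ∪ B := by
    rw [hAB]
    rintro (rfl | rfl)
    exacts [h₀ hz₀, h₁ hz₁]
  exact hz.imp (fun h => hi h) (fun h => hj h)

end IsSimplePolygon

end Polygon

theorem stmt8 {n : ℕ} (p : ZMod n → Plane) (hP : IsSimplePolygon p) (hn : 4 ≤ n)
    (a : Plane) (ha : a ∉ polyBody p)
    (hray : ∀ u : Plane, ‖u‖ = 1 → ∃ l : ℝ, 0 ≤ l ∧ a + l • u ∈ polyBody p) :
    ∃ i j : ZMod n, i ≠ j ∧ j ≠ i + 1 ∧ i ≠ j + 1 ∧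
      openSegment ℝ a (p i) ∩ polyBody p = ∅ ∧
      openSegment ℝ a (p j) ∩ polyBody p = ∅ := by
  by_contra! hcon
  obtain ⟨s, hs⟩ := ZMod.exists_subset_pair_of_pairwise_adjacent hn
    (V := {m | openSegment ℝ a (p m) ∩ polyBody p = ∅}) fun k hk l hl => by
      by_contra! h
      exact (hcon k l h.1 h.2.1 h.2.2 hk).ne_empty hl
  obtain ⟨i, j, hij⟩ := hP.exists_firstHit_mem_openEdge_union ha hray fun m hm => hs hm
  obtain ⟨f, tf, hfa, hf⟩ := geometric_hahn_banach_point_closed (convex_segment _ _)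
    (isCompact_segment _ _).isClosed fun h => ha (polyEdge_subset_polyBody i h)
  obtain ⟨g, tg, hga, hg⟩ := geometric_hahn_banach_point_closed (convex_segment _ _)
    (isCompact_segment _ _).isClosed fun h => ha (polyEdge_subset_polyBody j h)
  obtain ⟨u, hu, hfu, hgu, hu₀, hu₁⟩ := exists_unit_nonpos_nonpos_ne finrank_euclideanSpace_fin f g
    fun h => ha (polyEdge_subset_polyBody s (mem_segment_of_inv_norm_smul_eq_neg h))
  rcases hij u hu hu₀ hu₁ with hq | hq
  · exact add_smul_notMem_of_separated f hfa hf hfu firstHit_nonneg (openEdge_subset_polyEdge i hq)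
  · exact add_smul_notMem_of_separated g hga hg hgu firstHit_nonneg (openEdge_subset_polyEdge j hq)
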